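/- Let V₁ ⊆ ℤ² be infinite and connected with infinite connected complement, and define the dual boundary graph G* = (W*, F*) as the set of dual edges crossing the edge boundary of V₁. Then G* contains no cycle. -/

import Mathlib

/-! The dual edge boundary of an infinite connected subset of `ℤ²` with infinite
connected complement: every vertex of the dual boundary graph has no cycles.

Dual vertices `ℤ² + (1/2,1/2)` are identified with `ℤ²` (the dual vertex `v*`
corresponds to `v` with `v* = v + (1/2,1/2)`). Under this identification, the
dual edge between adjacent dual vertices `u, v` bisects the primal edge
`crossEdge u v` computed below. -/

/-- Nearest-neighbor adjacency in the square lattice `ℤ²`. -/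
def latAdj (x y : ℤ × ℤ) : Prop := |x.1 - y.1| + |x.2 - y.2| = 1

/-- A subset `S ⊆ ℤ²` is connected (in the nearest-neighbor lattice graph). -/
def latConnected (S : Set (ℤ × ℤ)) : Prop :=
  ∀ x ∈ S, ∀ y ∈ S, ∃ l : List (ℤ × ℤ), l.Chain' latAdj ∧ (∀ z ∈ l, z ∈ S) ∧
    l.head? = some x ∧ l.getLast? = some y

/-- Coordinatewise maximum of two lattice points. -/
def pmax (u v : ℤ × ℤ) : ℤ × ℤ := (max u.1 v.1, max u.2 v.2)

/-- The primal edge (as a two-element set of its endpoints) bisected by the dual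
edge with endpoints the dual vertices `u` and `v` (for `u, v` adjacent). -/
def crossEdge (u v : ℤ × ℤ) : Set (ℤ × ℤ) :=
  {pmax u v, pmax u v + (1 - |u.1 - v.1|, 1 - |u.2 - v.2|)}

/-- The edge boundary of `V₁`: primal edges with one endpoint in `V₁` and one in
the complement. -/
def edgeBoundary (V₁ : Set (ℤ × ℤ)) : Set (Set (ℤ × ℤ)) :=
  {e | ∃ x y, e = {x, y} ∧ latAdj x y ∧ x ∈ V₁ ∧ y ∉ V₁}

/-- Adjacency in the dual boundary graph `G* = (W*, F*)`: two adjacent dual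
vertices joined by a dual edge bisecting a boundary edge of `V₁`. -/
def dualAdj (V₁ : Set (ℤ × ℤ)) (u v : ℤ × ℤ) : Prop :=
  latAdj u v ∧ crossEdge u v ∈ edgeBoundary V₁

/-- The vertex set `W*` of the dual boundary graph: endpoints of dual edges in `F*`. -/
def dualVertices (V₁ : Set (ℤ × ℤ)) : Set (ℤ × ℤ) :=
  {u | ∃ v, dualAdj V₁ u v}


/-! Attach to every closed dual path `f` the winding number `winding k f x` around a primal
vertex `x`: the signed number of times the path crosses the vertical ray going down from `x`.
It can only change across a primal edge that the path crosses, so along a cycle of `G*` it is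
constant on `V₁` and on `V₁ᶜ`, which are connected. It vanishes far from the path, and both sets
are infinite, so it vanishes everywhere. But a simple cycle winds once around the vertex
diagonally above its bottom-left vertex. -/

lemma latAdj_iff (u v : ℤ × ℤ) : latAdj u v ↔
    v = (u.1 + 1, u.2) ∨ v = (u.1 - 1, u.2) ∨ v = (u.1, u.2 + 1) ∨ v = (u.1, u.2 - 1) := by
  unfold latAdj
  rw [Int.abs_eq_natAbs, Int.abs_eq_natAbs, Prod.ext_iff, Prod.ext_iff, Prod.ext_iff,
    Prod.ext_iff]
  omega

lemma latAdj.symm {u v : ℤ × ℤ} (h : latAdj u v) : latAdj v u := by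
  unfold latAdj at h ⊢
  rwa [abs_sub_comm u.1, abs_sub_comm u.2] at h

lemma latConnected.apply_eq {β : Type*} {S : Set (ℤ × ℤ)} (hS : latConnected S)
    {g : ℤ × ℤ → β} (hg : ∀ a ∈ S, ∀ b ∈ S, latAdj a b → g a = g b)
    {x y : ℤ × ℤ} (hx : x ∈ S) (hy : y ∈ S) : g x = g y := by
  obtain ⟨l, hl, hlS, hhead, hlast⟩ := hS x hx y hy
  refine ((List.IsChain.iff_mem.mp hl).induction (fun z => g z = g x) l ?_ ?_ y
    (List.mem_of_getLast? hlast)).symm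
  · rintro a b ⟨ha, hb, hab⟩ hax
    exact (hg a (hlS a ha) b (hlS b hb) hab).symm.trans hax
  · intro hl
    rw [List.head?_eq_some_head hl, Option.some_inj] at hhead
    rw [hhead]

lemma latConnected.eq_zero_of_finite_support {M : Type*} [Zero M] {S : Set (ℤ × ℤ)}
    (hS : latConnected S) (hSinf : S.Infinite) {g : ℤ × ℤ → M}
    (hg : (Function.support g).Finite) (hconst : ∀ a ∈ S, ∀ b ∈ S, latAdj a b → g a = g b)
    {x : ℤ × ℤ} (hx : x ∈ S) : g x = 0 := by
  obtain ⟨z, hzS, hz⟩ := (hSinf.sdiff hg).nonempty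
  rw [hS.apply_eq hconst hx hzS]
  simpa using hz

lemma not_iff_of_pair_mem_edgeBoundary {V₁ : Set (ℤ × ℤ)} {x y : ℤ × ℤ}
    (h : {x, y} ∈ edgeBoundary V₁) : ¬ (x ∈ V₁ ↔ y ∈ V₁) := by
  obtain ⟨x', y', hxy, -, hx', hy'⟩ := h
  rcases Set.pair_eq_pair_iff.mp hxy with ⟨rfl, rfl⟩ | ⟨rfl, rfl⟩ <;> tauto

lemma crossEdge_of_snd_eq {u v : ℤ × ℤ} (h : latAdj u v) (h2 : u.2 = v.2) :
    crossEdge u v = {(max u.1 v.1, u.2), (max u.1 v.1, u.2 + 1)} := by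
  obtain ⟨a, b⟩ := u
  rcases (latAdj_iff _ v).mp h with rfl | rfl | rfl | rfl <;>
    simp [crossEdge, pmax] at h2 ⊢
  omega

lemma crossEdge_of_fst_eq {u v : ℤ × ℤ} (h : latAdj u v) (h1 : u.1 = v.1) :
    crossEdge u v = {(u.1, max u.2 v.2), (u.1 + 1, max u.2 v.2)} := by
  obtain ⟨a, b⟩ := u
  rcases (latAdj_iff _ v).mp h with rfl | rfl | rfl | rfl <;>
    simp [crossEdge, pmax] at h1 ⊢
  omega

/-- Dual vertex `u` stands for the point `u + (1/2, 1/2)`; the step `u → v` crosses the ray going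
down from `x` exactly when it is horizontal, lies below `x` and joins the columns `x.1 - 1`
and `x.1`. -/
def rayCrossing (u v x : ℤ × ℤ) : ℤ :=
  if u.2 = v.2 ∧ u.2 < x.2 ∧ (u.1 = x.1 ∨ v.1 = x.1) ∧ u.1 ≤ x.1 ∧ v.1 ≤ x.1
  then v.1 - u.1 else 0

def winding (k : ℕ) (f : ℕ → ℤ × ℤ) (x : ℤ × ℤ) : ℤ :=
  ∑ i ∈ Finset.range k, rayCrossing (f i) (f (i + 1)) x

/-- The signed crossing of the horizontal primal edge `{x, x + (1, 0)}` by the step `u → v`. -/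
def edgeCrossing (u v x : ℤ × ℤ) : ℤ :=
  if u.1 = v.1 ∧ (u.2 = x.2 ∨ v.2 = x.2) ∧ u.2 ≤ x.2 ∧ v.2 ≤ x.2 ∧ u.1 = x.1
  then v.2 - u.2 else 0

/-- Whether the dual vertex `w` lies in the strip between the rays going down from `x` and
from `x + (1, 0)`. -/
def inStripBelow (x w : ℤ × ℤ) : ℤ := if w.1 = x.1 ∧ w.2 < x.2 then 1 else 0

/-- Whether the dual vertex `w` lies to the right of the ray going down from `x`. -/
def rightOfRay (x w : ℤ × ℤ) : ℤ := if x.1 ≤ w.1 then 1 else 0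

lemma crossEdge_eq_of_rayCrossing_ne {u v x : ℤ × ℤ} (h : latAdj u v)
    (hne : rayCrossing u v x ≠ rayCrossing u v (x.1, x.2 + 1)) :
    crossEdge u v = {x, (x.1, x.2 + 1)} := by
  have hk : u.2 = v.2 ∧ max u.1 v.1 = x.1 ∧ u.2 = x.2 := by
    unfold rayCrossing at hne
    split_ifs at hne <;> omega
  rw [crossEdge_of_snd_eq h hk.1, hk.2.1, hk.2.2]

lemma crossEdge_eq_of_edgeCrossing_ne_zero {u v x : ℤ × ℤ} (h : latAdj u v)
    (hne : edgeCrossing u v x ≠ 0) : crossEdge u v = {x, (x.1 + 1, x.2)} := by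
  have hk : u.1 = v.1 ∧ max u.2 v.2 = x.2 ∧ u.1 = x.1 := by
    unfold edgeCrossing at hne
    split_ifs at hne <;> omega
  rw [crossEdge_of_fst_eq h hk.1, hk.2.1, hk.2.2]

lemma rayCrossing_sub_rayCrossing_right {u v : ℤ × ℤ} (h : latAdj u v) (x : ℤ × ℤ) :
    rayCrossing u v x - rayCrossing u v (x.1 + 1, x.2) =
      edgeCrossing u v x + (inStripBelow x v - inStripBelow x u) := by
  rcases (latAdj_iff u v).mp h with rfl | rfl | rfl | rfl <;>
    simp only [rayCrossing, edgeCrossing, inStripBelow, true_and] <;> split_ifs <;> omega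

section ClosedPath

variable {k : ℕ} {f : ℕ → ℤ × ℤ}

lemma apply_succ_of_closed {P : ℤ × ℤ → Prop} (hcl : f 0 = f k) (h : ∀ j < k, P (f j))
    {i : ℕ} (hi : i < k) : P (f (i + 1)) := by
  rcases (show i + 1 ≤ k from hi).lt_or_eq with hlt | heq
  · exact h _ hlt
  · rw [heq, ← hcl]
    exact h 0 (by omega)

lemma winding_sub_winding_right (hcl : f 0 = f k) (hlat : ∀ i < k, latAdj (f i) (f (i + 1)))
    (x : ℤ × ℤ) : winding k f x - winding k f (x.1 + 1, x.2) =
      ∑ i ∈ Finset.range k, edgeCrossing (f i) (f (i + 1)) x := by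
  rw [winding, winding, ← Finset.sum_sub_distrib,
    Finset.sum_congr rfl fun i hi => rayCrossing_sub_rayCrossing_right
      (hlat i (Finset.mem_range.mp hi)) x,
    Finset.sum_add_distrib, Finset.sum_range_sub (fun i => inStripBelow x (f i)), hcl,
    sub_self, add_zero]

lemma exists_crossEdge_of_winding_ne_up {x : ℤ × ℤ} (hlat : ∀ i < k, latAdj (f i) (f (i + 1)))
    (hne : winding k f x ≠ winding k f (x.1, x.2 + 1)) :
    ∃ i < k, crossEdge (f i) (f (i + 1)) = {x, (x.1, x.2 + 1)} := by
  rw [← sub_ne_zero, winding, winding, ← Finset.sum_sub_distrib] at hne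
  obtain ⟨i, hi, hi'⟩ := Finset.exists_ne_zero_of_sum_ne_zero hne
  rw [Finset.mem_range] at hi
  exact ⟨i, hi, crossEdge_eq_of_rayCrossing_ne (hlat i hi) (sub_ne_zero.mp hi')⟩

lemma exists_crossEdge_of_winding_ne_right {x : ℤ × ℤ} (hcl : f 0 = f k)
    (hlat : ∀ i < k, latAdj (f i) (f (i + 1)))
    (hne : winding k f x ≠ winding k f (x.1 + 1, x.2)) :
    ∃ i < k, crossEdge (f i) (f (i + 1)) = {x, (x.1 + 1, x.2)} := by
  rw [← sub_ne_zero, winding_sub_winding_right hcl hlat] at hne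
  obtain ⟨i, hi, hi'⟩ := Finset.exists_ne_zero_of_sum_ne_zero hne
  rw [Finset.mem_range] at hi
  exact ⟨i, hi, crossEdge_eq_of_edgeCrossing_ne_zero (hlat i hi) hi'⟩

lemma exists_crossEdge_of_winding_ne {x y : ℤ × ℤ} (hcl : f 0 = f k)
    (hlat : ∀ i < k, latAdj (f i) (f (i + 1))) (hxy : latAdj x y)
    (hne : winding k f x ≠ winding k f y) : ∃ i < k, crossEdge (f i) (f (i + 1)) = {x, y} := by
  rcases (latAdj_iff x y).mp hxy with rfl | rfl | rfl | rfl
  · exact exists_crossEdge_of_winding_ne_right hcl hlat hne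
  · obtain ⟨i, hi, h⟩ :=
      exists_crossEdge_of_winding_ne_right (x := (x.1 - 1, x.2)) hcl hlat (by simpa using hne.symm)
    exact ⟨i, hi, by simpa [Set.pair_comm] using h⟩
  · exact exists_crossEdge_of_winding_ne_up hlat hne
  · obtain ⟨i, hi, h⟩ :=
      exists_crossEdge_of_winding_ne_up (x := (x.1, x.2 - 1)) hlat (by simpa using hne.symm)
    exact ⟨i, hi, by simpa [Set.pair_comm] using h⟩

lemma winding_eq_zero_of_le_snd {x : ℤ × ℤ} (h : ∀ i < k, x.2 ≤ (f i).2) :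
    winding k f x = 0 :=
  Finset.sum_eq_zero fun i hi => if_neg fun hc => by
    have := h i (Finset.mem_range.mp hi)
    omega

lemma winding_eq_zero_of_fst_ne {x : ℤ × ℤ} (hcl : f 0 = f k) (h : ∀ i < k, (f i).1 ≠ x.1) :
    winding k f x = 0 :=
  Finset.sum_eq_zero fun i hi => if_neg fun hc => by
    rw [Finset.mem_range] at hi
    rcases hc.2.2.1 with hcol | hcol
    · exact h i hi hcol
    · exact apply_succ_of_closed (P := fun w => w.1 ≠ x.1) hcl h hi hcol

/-- A ray starting above the whole path meets every horizontal step whose ends lie on both sides,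
so the crossings telescope. -/
lemma winding_eq_zero_of_snd_lt {x : ℤ × ℤ} (hcl : f 0 = f k)
    (hlat : ∀ i < k, latAdj (f i) (f (i + 1))) (h : ∀ i < k, (f i).2 < x.2) :
    winding k f x = 0 := by
  have hstep : ∀ i ∈ Finset.range k,
      rayCrossing (f i) (f (i + 1)) x = rightOfRay x (f (i + 1)) - rightOfRay x (f i) := by
    intro i hi
    rw [Finset.mem_range] at hi
    have hrow := h i hi
    rcases (latAdj_iff _ _).mp (hlat i hi) with hc | hc | hc | hc <;>
      rw [hc] <;> simp only [rayCrossing, rightOfRay, true_and] <;> split_ifs <;> omega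
  rw [winding, Finset.sum_congr rfl hstep, Finset.sum_range_sub (fun i => rightOfRay x (f i)),
    hcl, sub_self]

lemma finite_support_winding (hcl : f 0 = f k) (hlat : ∀ i < k, latAdj (f i) (f (i + 1))) :
    (Function.support (winding k f)).Finite := by
  classical
  set cols := (Finset.range k).image fun i => (f i).1
  set rows := (Finset.range k).image fun i => (f i).2
  have hrows : ∀ i < k, (f i).2 ∈ rows := fun i hi =>
    Finset.mem_image_of_mem _ (Finset.mem_range.mpr hi)
  obtain ⟨lo, hlo⟩ := rows.bddBelow
  obtain ⟨hi, hhi⟩ := rows.bddAbove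
  refine (cols.finite_toSet.prod (Set.finite_Icc lo hi)).subset fun x hx => ?_
  rw [Function.mem_support] at hx
  refine ⟨?_, ?_, ?_⟩
  · by_contra hcol
    exact hx (winding_eq_zero_of_fst_ne hcl fun i hi h =>
      hcol (Finset.mem_image.mpr ⟨i, Finset.mem_range.mpr hi, h⟩))
  · by_contra hlow
    exact hx (winding_eq_zero_of_le_snd fun i hi => by
      have := hlo (hrows i hi)
      omega)
  · by_contra hhigh
    exact hx (winding_eq_zero_of_snd_lt hcl hlat fun i hi => by
      have := hhi (hrows i hi)
      omega)

lemma winding_eq_of_latAdj {V₁ : Set (ℤ × ℤ)} (hcl : f 0 = f k)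
    (hadj : ∀ i < k, dualAdj V₁ (f i) (f (i + 1))) {x y : ℤ × ℤ} (hxy : latAdj x y)
    (hV₁ : x ∈ V₁ ↔ y ∈ V₁) : winding k f x = winding k f y := by
  by_contra hne
  obtain ⟨i, hi, hcross⟩ :=
    exists_crossEdge_of_winding_ne hcl (fun i hi => (hadj i hi).1) hxy hne
  exact not_iff_of_pair_mem_edgeBoundary (hcross ▸ (hadj i hi).2) hV₁

end ClosedPath

def rowLex (w : ℤ × ℤ) : Lex (ℤ × ℤ) := toLex (w.2, w.1)

lemma eq_right_or_eq_up_of_latAdj {A w : ℤ × ℤ} (h : latAdj A w) (hw : rowLex A ≤ rowLex w) :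
    w = (A.1 + 1, A.2) ∨ w = (A.1, A.2 + 1) := by
  simp only [rowLex, Prod.Lex.toLex_le_toLex] at hw
  rcases (latAdj_iff A w).mp h with rfl | rfl | rfl | rfl <;> simp at hw ⊢
  all_goals omega

lemma eq_and_eq_of_rayCrossing_ne_zero {A u v : ℤ × ℤ}
    (hu : rowLex A ≤ rowLex u) (hv : rowLex A ≤ rowLex v)
    (hne : rayCrossing u v (A.1 + 1, A.2 + 1) ≠ 0) :
    u = A ∧ v = (A.1 + 1, A.2) ∨ u = (A.1 + 1, A.2) ∧ v = A := by
  simp only [rowLex, Prod.Lex.toLex_le_toLex] at hu hv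
  unfold rayCrossing at hne
  simp only [Prod.ext_iff]
  split_ifs at hne <;> omega

section SimpleClosedPath

variable {k : ℕ} {f : ℕ → ℤ × ℤ}

lemma exists_apply_succ_eq (hcl : f 0 = f k) {i : ℕ} (hi : i < k) : ∃ p < k, f (p + 1) = f i := by
  rcases Nat.eq_zero_or_pos i with rfl | hpos
  · exact ⟨k - 1, by omega, by rw [Nat.sub_add_cancel (by omega), hcl]⟩
  · exact ⟨i - 1, by omega, by rw [Nat.sub_add_cancel hpos]⟩

lemma succ_eq_or_of_apply_succ_eq (hcl : f 0 = f k)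
    (hinj : ∀ i j, i < k → j < k → f i = f j → i = j) {i j : ℕ} (hi : i < k) (hj : j < k)
    (h : f (i + 1) = f j) : i + 1 = j ∨ i + 1 = k ∧ j = 0 := by
  rcases (show i + 1 ≤ k from hi).lt_or_eq with hlt | heq
  · exact Or.inl (hinj _ _ hlt hj h)
  · exact Or.inr ⟨heq, hinj _ _ hj (by omega) (by rw [← h, heq, hcl])⟩

/-- The ray going down from the point diagonally above the bottom-left vertex `A` of a simple
closed path meets only the edge from `A` to its right neighbour, which the path traverses
exactly once. -/
theorem exists_winding_ne_zero (hk : 3 ≤ k) (hcl : f 0 = f k)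
    (hlat : ∀ i < k, latAdj (f i) (f (i + 1)))
    (hinj : ∀ i j, i < k → j < k → f i = f j → i = j) : ∃ x, winding k f x ≠ 0 := by
  obtain ⟨i₀, hi₀, hmin⟩ := (Finset.range k).exists_min_image (fun i => rowLex (f i))
    ⟨0, Finset.mem_range.mpr (by omega)⟩
  rw [Finset.mem_range] at hi₀
  replace hmin : ∀ j < k, rowLex (f i₀) ≤ rowLex (f j) :=
    fun j hj => hmin j (Finset.mem_range.mpr hj)
  have hmin' {i : ℕ} (hi : i < k) : rowLex (f i₀) ≤ rowLex (f (i + 1)) :=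
    apply_succ_of_closed (P := fun w => rowLex (f i₀) ≤ rowLex w) hcl hmin hi
  set A := f i₀
  obtain ⟨p, hp, hpA⟩ := exists_apply_succ_eq hcl hi₀
  have hp' := succ_eq_or_of_apply_succ_eq hcl hinj hp hi₀ hpA
  have hnext := eq_right_or_eq_up_of_latAdj (hlat i₀ hi₀) (hmin' hi₀)
  have hprev := eq_right_or_eq_up_of_latAdj (hpA ▸ hlat p hp).symm (hmin p hp)
  have hne : f (i₀ + 1) ≠ f p := fun h => by
    have := succ_eq_or_of_apply_succ_eq hcl hinj hi₀ hp h
    omega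
  have hcross : ∀ i < k, rayCrossing (f i) (f (i + 1)) (A.1 + 1, A.2 + 1) ≠ 0 →
      i = i₀ ∧ f (i₀ + 1) = (A.1 + 1, A.2) ∨ i = p ∧ f p = (A.1 + 1, A.2) := by
    intro i hi h
    rcases eq_and_eq_of_rayCrossing_ne_zero (hmin i hi) (hmin' hi) h with
      ⟨h1, h2⟩ | ⟨h1, h2⟩
    · obtain rfl := hinj i i₀ hi hi₀ h1
      exact Or.inl ⟨rfl, h2⟩
    · have := succ_eq_or_of_apply_succ_eq hcl hinj hi hi₀ h2
      obtain rfl : i = p := by omega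
      exact Or.inr ⟨rfl, h1⟩
  refine ⟨(A.1 + 1, A.2 + 1), ?_⟩
  rcases hnext with hright | hup
  · rw [winding, Finset.sum_eq_single_of_mem i₀ (Finset.mem_range.mpr hi₀) fun i hi hii₀ => ?_,
      hright]
    · simp [rayCrossing, A]
    · by_contra h
      rcases hcross i (Finset.mem_range.mp hi) h with ⟨h1, -⟩ | ⟨-, h2⟩
      · exact hii₀ h1
      · exact hne (hright.trans h2.symm)
  · have hpB : f p = (A.1 + 1, A.2) := hprev.resolve_right fun h => hne (hup.trans h.symm)
    rw [winding, Finset.sum_eq_single_of_mem p (Finset.mem_range.mpr hp) fun i hi hip => ?_,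
      hpA, hpB]
    · simp [rayCrossing, A]
    · by_contra h
      rcases hcross i (Finset.mem_range.mp hi) h with ⟨-, h2⟩ | ⟨h1, -⟩
      · exact hne (h2.trans hpB.symm)
      · exact hip h1

end SimpleClosedPath

theorem dual_boundary_no_cycle (V₁ : Set (ℤ × ℤ))
    (hV₁inf : V₁.Infinite) (hV₁conn : latConnected V₁)
    (hV₁cinf : V₁ᶜ.Infinite) (hV₁cconn : latConnected V₁ᶜ) :
    ¬ ∃ (k : ℕ) (f : ℕ → ℤ × ℤ), 3 ≤ k ∧ f 0 = f k ∧
        (∀ i < k, dualAdj V₁ (f i) (f (i + 1))) ∧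
        (∀ i j, i < k → j < k → f i = f j → i = j) := by
  rintro ⟨k, f, hk, hcl, hadj, hinj⟩
  have hlat : ∀ i < k, latAdj (f i) (f (i + 1)) := fun i hi => (hadj i hi).1
  have hfin := finite_support_winding hcl hlat
  obtain ⟨x, hx⟩ := exists_winding_ne_zero hk hcl hlat hinj
  by_cases hxV₁ : x ∈ V₁
  · exact hx (hV₁conn.eq_zero_of_finite_support hV₁inf hfin
      (fun a ha b hb hab => winding_eq_of_latAdj hcl hadj hab (iff_of_true ha hb)) hxV₁)
  · exact hx (hV₁cconn.eq_zero_of_finite_support hV₁cinf hfin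
      (fun a ha b hb hab => winding_eq_of_latAdj hcl hadj hab (iff_of_false ha hb)) hxV₁)
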